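/- There is a constant C* ≥ 1 such that the following holds. Let n, m, k, r be integers with n/2 ≥ m ≥ k ≥ 1 and r ≥ 2. Then there exist an integer n' with n/2 < n' ≤ n and an (ε,δ,m)-balanced coloring γ : C([n'],k) → [r], where ε = 4r²k·exp(−√m/(16k)) + r·(3C*·(log(n+r))²/m^{1/4})^k and δ = 4r·exp(−√m/8). -/

import Mathlib

/-- The coloring `γ` of the `k`-element subsets of `{1,…,n'}` with `r` colors is
`ε`-balanced on `A`. -/
def EpsBalancedOn {n k r : ℕ} (γ : {S : Finset (Fin n) // S.card = k} → Fin r) (ε : ℝ)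
    (A : Finset (Fin n)) : Prop :=
  ∀ i : Fin r,
    ((1 - ε) / r) * (A.card.choose k : ℝ) ≤
      (Nat.card {S : {S : Finset (Fin n) // S.card = k} // γ S = i ∧ S.1 ⊆ A} : ℝ) ∧
    (Nat.card {S : {S : Finset (Fin n) // S.card = k} // γ S = i ∧ S.1 ⊆ A} : ℝ) ≤
      ((1 + ε) / r) * (A.card.choose k : ℝ)

/-- `γ` is `(ε,δ,m)`-balanced. -/
def IsBalancedColoring {n k r : ℕ} (m : ℕ) (ε δ : ℝ)
    (γ : {S : Finset (Fin n) // S.card = k} → Fin r) : Prop :=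
  ∀ ℓ : ℕ, m ≤ ℓ → ℓ ≤ n →
    (1 - δ) * (n.choose ℓ : ℝ) ≤
      (Nat.card {A : Finset (Fin n) // A.card = ℓ ∧ EpsBalancedOn γ ε A} : ℝ)

/-!
A uniformly random coloring works, with `n' = n` and `C* = 1`. Fix `A` with `|A| ≥ m` and let
`X` count the `k`-subsets of `A` of a fixed color, out of `N = C(|A|, k)`. Its exponential
moment over all colorings is at most `exp (N (eʷ - 1) / r)` times their number, so Markov's
inequality with `w = ± min(ε, 1) / 4` shows that a random coloring fails to be `ε`-balanced on
`A` with probability at most `2r exp (-ε min(ε, 1) N / (8r))`. Averaging over the at most `n + 1`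
sizes `ℓ` yields one coloring for which every fraction of bad `ℓ`-sets is at most `n + 1` times
that bound. If `ε ≥ r` every coloring is balanced. Otherwise `s := (3 log₂(n + r)² / m^{1/4})^k`
is at most `1`, the first summand of `ε` being below `r` forces `√m > 16k`, and
`C(m, k) ≥ (m/k)^k` gives `s² C(m, k) ≥ √m + 8 log (n + 1)`, which turns the bound into `δ`.
-/

open Finset Real

theorem Nat.pow_div_le_choose {α : Type*} [Field α] [LinearOrder α] [IsStrictOrderedRing α]
    {m k : ℕ} (h : k ≤ m) : ((m : α) / k) ^ k ≤ m.choose k := by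
  induction k generalizing m with
  | zero => simp
  | succ k ih =>
    obtain ⟨m, rfl⟩ : ∃ m', m = m' + 1 := ⟨m - 1, by omega⟩
    rcases Nat.eq_zero_or_pos k with rfl | hk
    · simp
    have hstep : ((m + 1 : ℕ) : α) / (k + 1 : ℕ) ≤ (m : α) / k := by
      rw [div_le_div_iff₀ (by positivity) (by positivity)]
      push_cast
      nlinarith [(Nat.cast_le (α := α)).2 (Nat.le_of_succ_le_succ h)]
    have hchoose :
        ((m + 1).choose (k + 1) : α) = ((m + 1 : ℕ) : α) / (k + 1 : ℕ) * m.choose k := by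
      rw [eq_comm, div_mul_eq_mul_div, div_eq_iff (by positivity)]
      exact_mod_cast Nat.add_one_mul_choose_eq m k
    calc (((m + 1 : ℕ) : α) / (k + 1 : ℕ)) ^ (k + 1)
        = ((m + 1 : ℕ) : α) / (k + 1 : ℕ) * (((m + 1 : ℕ) : α) / (k + 1 : ℕ)) ^ k := by
          ring
      _ ≤ ((m + 1 : ℕ) : α) / (k + 1 : ℕ) * ((m : α) / k) ^ k := by gcongr
      _ ≤ ((m + 1 : ℕ) : α) / (k + 1 : ℕ) * m.choose k := by gcongr; exact ih (by omega)
      _ = _ := hchoose.symm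

section Chernoff

variable {K : Type*} [Fintype K] [DecidableEq K] {r : ℕ} (𝒜 : Finset K) (i : Fin r)

theorem sum_exp_mul_card_filter_le (hr : 0 < r) (w : ℝ) :
    ∑ γ : K → Fin r, exp (w * #{S ∈ 𝒜 | γ S = i}) ≤
      exp (#𝒜 * (exp w - 1) / r) * r ^ Fintype.card K := by
  let g : K → Fin r → ℝ := fun S c => if S ∈ 𝒜 ∧ c = i then exp w else 1
  have hprod (γ : K → Fin r) : exp (w * #{S ∈ 𝒜 | γ S = i}) = ∏ S, g S (γ S) := by
    simp only [g, ite_and]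
    rw [prod_ite_mem, univ_inter, ← prod_filter, prod_const, ← exp_nat_mul, mul_comm]
  have hfactor (S : K) : ∑ c, g S c ≤ r * exp (if S ∈ 𝒜 then (exp w - 1) / r else 0) := by
    by_cases hS : S ∈ 𝒜
    · have hsum : ∑ c, g S c = r * (1 + (exp w - 1) / r) := by
        have hsplit (c : Fin r) : g S c = (if c = i then exp w - 1 else 0) + 1 := by
          simp only [g, hS, true_and]; split_ifs <;> ring
        simp only [hsplit, sum_add_distrib, sum_ite_eq', mem_univ, if_true, sum_const, card_univ,
          Fintype.card_fin, nsmul_eq_mul, mul_one]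
        field_simp
        ring
      rw [hsum, if_pos hS]
      gcongr
      linarith [add_one_le_exp ((exp w - 1) / r)]
    · simp [g, hS]
  calc ∑ γ : K → Fin r, exp (w * #{S ∈ 𝒜 | γ S = i})
      = ∏ S, ∑ c, g S c := by simp_rw [hprod, Fintype.prod_sum]
    _ ≤ ∏ S : K, (r * exp (if S ∈ 𝒜 then (exp w - 1) / r else 0)) :=
        prod_le_prod (fun S _ => sum_nonneg fun c _ => by positivity) fun S _ => hfactor S
    _ = _ := by
        rw [prod_mul_distrib, prod_const, ← exp_sum, sum_ite_mem, univ_inter, sum_const,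
          nsmul_eq_mul, mul_div_assoc, mul_comm, card_univ]

/-- For `w > 0` the event is the upper tail `X ≥ (1 + ε) N / r` of the number `X` of sets of
color `i` among the `N` sets of `𝒜`, for `w < 0` it is the lower tail `X ≤ (1 - ε) N / r`. -/
theorem card_deviation_le (hr : 0 < r) {w ε : ℝ} (hw : |w| ≤ 1) (hwε : 2 * |w| ≤ ε) :
    (#{γ : K → Fin r | |w| * (ε * #𝒜 / r) ≤ w * (#{S ∈ 𝒜 | γ S = i} - #𝒜 / r)} : ℝ) ≤
      exp (-(|w| * ε * #𝒜 / (2 * r))) * r ^ Fintype.card K := by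
  have hmarkov :
      (#{γ : K → Fin r | |w| * (ε * #𝒜 / r) ≤ w * (#{S ∈ 𝒜 | γ S = i} - #𝒜 / r)} : ℝ) *
      exp (w * (#𝒜 / r) + |w| * (ε * #𝒜 / r)) ≤
        exp (#𝒜 * (exp w - 1) / r) * r ^ Fintype.card K := by
    refine le_trans ?_ (sum_exp_mul_card_filter_le 𝒜 i hr w)
    rw [← nsmul_eq_mul, ← sum_const]
    refine (sum_le_sum fun γ hγ => exp_le_exp.2 ?_).trans
      (sum_le_sum_of_subset_of_nonneg (filter_subset _ _) fun _ _ _ => (exp_pos _).le)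
    have := (mem_filter.1 hγ).2
    rw [mul_sub] at this
    linarith
  have hexponent : #𝒜 * (exp w - 1) / r - (w * (#𝒜 / r) + |w| * (ε * #𝒜 / r)) ≤
      -(|w| * ε * #𝒜 / (2 * r)) := by
    have hexp : exp w - 1 - w ≤ w ^ 2 := (abs_le.1 (abs_exp_sub_one_sub_id_le hw)).2
    have hsq : w ^ 2 ≤ |w| * ε / 2 := by nlinarith [sq_abs w, abs_nonneg w]
    have : (#𝒜 : ℝ) / r * (exp w - 1 - w - |w| * ε / 2) ≤ 0 :=
      mul_nonpos_of_nonneg_of_nonpos (by positivity) (by linarith)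
    linear_combination this
  calc _ ≤ exp (#𝒜 * (exp w - 1) / r - (w * (#𝒜 / r) + |w| * (ε * #𝒜 / r))) *
        r ^ Fintype.card K := by
        rw [exp_sub, div_mul_eq_mul_div, le_div_iff₀ (exp_pos _)]; exact hmarkov
    _ ≤ _ := by gcongr

end Chernoff

theorem exists_forall_card_filter_le {Γ X ι : Type*} [Fintype Γ] [Nonempty Γ]
    (P : Γ → X → Prop) [∀ γ x, Decidable (P γ x)] (s : Finset ι) (T : ι → Finset X) {p : ℝ}
    (hp : 0 ≤ p)
    (h : ∀ j ∈ s, ∀ x ∈ T j, (#{γ | P γ x} : ℝ) ≤ p * Fintype.card Γ) :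
    ∃ γ, ∀ j ∈ s, (#{x ∈ T j | P γ x} : ℝ) ≤ #s * p * #(T j) := by
  have hdouble (j : ι) : ∑ γ, #{x ∈ T j | P γ x} = ∑ x ∈ T j, #{γ | P γ x} := by
    simp only [card_filter]; exact sum_comm
  have hsum :
      ∑ γ, ∑ j ∈ s, (#{x ∈ T j | P γ x} : ℝ) / #(T j) ≤ ∑ _γ : Γ, #s * p := by
    rw [sum_comm]
    calc ∑ j ∈ s, ∑ γ, (#{x ∈ T j | P γ x} : ℝ) / #(T j)
        = ∑ j ∈ s, (∑ x ∈ T j, #{γ | P γ x} : ℝ) / #(T j) := by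
          refine sum_congr rfl fun j _ => ?_
          rw [← sum_div]; exact_mod_cast congrArg (fun N : ℕ => (N : ℝ) / #(T j)) (hdouble j)
      _ ≤ ∑ _j ∈ s, p * Fintype.card Γ := sum_le_sum fun j hj =>
          div_le_of_le_mul₀ (Nat.cast_nonneg _) (by positivity)
            ((sum_le_card_nsmul _ _ _ (h j hj)).trans_eq (by rw [nsmul_eq_mul, mul_comm]))
      _ = ∑ _γ : Γ, #s * p := by simp only [sum_const, nsmul_eq_mul, card_univ]; ring
  obtain ⟨γ, -, hγ⟩ := exists_le_of_sum_le univ_nonempty hsum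
  refine ⟨γ, fun j hj => ?_⟩
  have hj : (#{x ∈ T j | P γ x} : ℝ) / #(T j) ≤ #s * p :=
    (single_le_sum (f := fun j => (#{x ∈ T j | P γ x} : ℝ) / #(T j))
      (fun _ _ => by positivity) hj).trans hγ
  rcases (T j).eq_empty_or_nonempty with hT | hT
  · simp [hT]
  · rwa [div_le_iff₀ (by exact_mod_cast hT.card_pos)] at hj

section Balanced

variable {n k r : ℕ}

theorem card_filter_subset_eq_choose (A : Finset (Fin n)) :
    #{S : {S : Finset (Fin n) // S.card = k} | S.1 ⊆ A} = A.card.choose k := by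
  rw [← card_powersetCard k A]
  refine card_bij (fun S _ => S.1) (fun S hS => mem_powersetCard.2 ⟨(mem_filter.1 hS).2, S.2⟩)
    (fun S _ T _ h => Subtype.ext h) fun B hB => ?_
  rw [mem_powersetCard] at hB
  exact ⟨⟨B, hB.2⟩, by simp [hB.1], rfl⟩

theorem natCard_color_subset_eq_card_filter (γ : {S : Finset (Fin n) // S.card = k} → Fin r)
    (i : Fin r) (A : Finset (Fin n)) :
    Nat.card {S : {S : Finset (Fin n) // S.card = k} // γ S = i ∧ S.1 ⊆ A} =
      #{S ∈ ({S | S.1 ⊆ A} : Finset {S : Finset (Fin n) // S.card = k}) | γ S = i} := by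
  rw [Nat.card_eq_fintype_card, Fintype.card_subtype, filter_filter]
  simp only [and_comm]

theorem epsBalancedOn_iff (γ : {S : Finset (Fin n) // S.card = k} → Fin r) (ε : ℝ)
    (A : Finset (Fin n)) :
    EpsBalancedOn γ ε A ↔ ∀ i,
      |(Nat.card {S : {S : Finset (Fin n) // S.card = k} // γ S = i ∧ S.1 ⊆ A} : ℝ) -
        A.card.choose k / r| ≤ ε * A.card.choose k / r := by
  refine forall_congr' fun i => ?_
  have hlow : (1 - ε) / r * (A.card.choose k : ℝ) =
      A.card.choose k / r - ε * A.card.choose k / r := by ring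
  have hhigh : (1 + ε) / r * (A.card.choose k : ℝ) =
      A.card.choose k / r + ε * A.card.choose k / r := by ring
  rw [abs_sub_le_iff, hlow, hhigh]
  constructor <;> rintro ⟨h₁, h₂⟩ <;> constructor <;> linarith

open Classical in
theorem card_not_epsBalancedOn_le (hr : 0 < r) {ε : ℝ} (hε : 0 ≤ ε) (A : Finset (Fin n)) :
    (#{γ : {S : Finset (Fin n) // S.card = k} → Fin r | ¬ EpsBalancedOn γ ε A} : ℝ) ≤
      2 * r * exp (-(ε * min ε 1 * A.card.choose k / (8 * r))) *
        r ^ Fintype.card {S : Finset (Fin n) // S.card = k} := by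
  set K := {S : Finset (Fin n) // S.card = k}
  set 𝒜 : Finset K := {S | S.1 ⊆ A}
  have h𝒜 : (#𝒜 : ℝ) = A.card.choose k := by rw [card_filter_subset_eq_choose]
  obtain ⟨w, hw⟩ : ∃ w : ℝ, w = min ε 1 / 4 := ⟨_, rfl⟩
  have hw0 : 0 ≤ w := by rw [hw]; positivity
  have hw1 : w ≤ 1 := by linarith [min_le_right ε 1]
  have hwε : 2 * w ≤ ε := by linarith [min_le_left ε 1]
  let dev : ℝ → Fin r → Finset (K → Fin r) := fun v i =>
    {γ | |v| * (ε * #𝒜 / r) ≤ v * (#{S ∈ 𝒜 | γ S = i} - #𝒜 / r)}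
  have hdev (v : ℝ) (hv : |v| = w) (i : Fin r) :
      (#(dev v i) : ℝ) ≤
        exp (-(ε * min ε 1 * A.card.choose k / (8 * r))) * r ^ Fintype.card K := by
    refine (card_deviation_le 𝒜 i hr (by rwa [hv]) (by rwa [hv])).trans_eq ?_
    rw [hv, hw, h𝒜]; congr 2; ring
  have hsub : ({γ | ¬ EpsBalancedOn γ ε A} : Finset (K → Fin r)) ⊆
      univ.biUnion fun i => dev w i ∪ dev (-w) i := by
    intro γ hγ
    obtain ⟨i, hi⟩ := not_forall.1 ((epsBalancedOn_iff γ ε A).not.1 (mem_filter.1 hγ).2)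
    rw [not_le, natCard_color_subset_eq_card_filter, ← h𝒜] at hi
    simp only [mem_biUnion, mem_univ, true_and, mem_union, dev, mem_filter, abs_neg,
      abs_of_nonneg hw0]
    refine ⟨i, ?_⟩
    rcases lt_abs.1 hi with hhigh | hlow
    · exact Or.inl (mul_le_mul_of_nonneg_left hhigh.le hw0)
    · rw [neg_mul, ← mul_neg]
      exact Or.inr (mul_le_mul_of_nonneg_left hlow.le hw0)
  calc (#{γ : K → Fin r | ¬ EpsBalancedOn γ ε A} : ℝ)
      ≤ ∑ i, ((#(dev w i) : ℝ) + #(dev (-w) i)) := by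
        exact_mod_cast (card_le_card hsub).trans (card_biUnion_le.trans
          (sum_le_sum fun i _ => card_union_le _ _))
    _ ≤ ∑ _i : Fin r,
          2 * (exp (-(ε * min ε 1 * A.card.choose k / (8 * r))) * r ^ Fintype.card K) :=
        sum_le_sum fun i _ => by
          linarith [hdev w (abs_of_nonneg hw0) i, hdev (-w) (by rw [abs_neg, abs_of_nonneg hw0]) i]
    _ = _ := by simp only [sum_const, card_univ, Fintype.card_fin, nsmul_eq_mul]; ring

open Classical in
theorem card_not_epsBalancedOn_le_of_mul_le {m : ℕ} (hr : 0 < r) {ε s : ℝ} (hs0 : 0 ≤ s)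
    (hs1 : s ≤ 1) (hrs : r * s ≤ ε) {A : Finset (Fin n)} (hA : m ≤ #A) :
    (#{γ : {S : Finset (Fin n) // S.card = k} → Fin r | ¬ EpsBalancedOn γ ε A} : ℝ) ≤
      2 * r * exp (-(s ^ 2 * m.choose k) / 8) *
        r ^ Fintype.card {S : Finset (Fin n) // S.card = k} := by
  have hε0 : 0 ≤ ε := (by positivity : (0 : ℝ) ≤ r * s).trans hrs
  have hC : (m.choose k : ℝ) ≤ (#A).choose k := by exact_mod_cast Nat.choose_le_choose k hA
  have hmin : s ≤ min ε 1 :=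
    le_min ((le_mul_of_one_le_left hs0 (Nat.one_le_cast.2 hr)).trans hrs) hs1
  refine (card_not_epsBalancedOn_le hr hε0 A).trans ?_
  gcongr
  rw [neg_div, neg_le_neg_iff, div_le_div_iff₀ (by norm_num) (by positivity)]
  nlinarith [mul_le_mul (mul_le_mul hrs hmin hs0 hε0) hC (by positivity) (by positivity)]

theorem natCard_epsBalancedOn_eq (γ : {S : Finset (Fin n) // S.card = k} → Fin r)
    (ε : ℝ) (ℓ : ℕ) [DecidablePred (EpsBalancedOn γ ε)] :
    Nat.card {A : Finset (Fin n) // A.card = ℓ ∧ EpsBalancedOn γ ε A} =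
      #{A ∈ powersetCard ℓ (univ : Finset (Fin n)) | EpsBalancedOn γ ε A} := by
  rw [Nat.card_eq_fintype_card, Fintype.card_subtype]
  congr 1; ext A; simp

open Classical in
theorem exists_isBalancedColoring {m : ℕ} (hr : 0 < r) {ε δ p : ℝ} (hp : 0 ≤ p)
    (hbad : ∀ A : Finset (Fin n), m ≤ #A →
      (#{γ : {S : Finset (Fin n) // S.card = k} → Fin r | ¬ EpsBalancedOn γ ε A} : ℝ) ≤
        p * r ^ Fintype.card {S : Finset (Fin n) // S.card = k})
    (hδ : (n + 1) * p ≤ δ) :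
    ∃ γ : {S : Finset (Fin n) // S.card = k} → Fin r, IsBalancedColoring m ε δ γ := by
  have : Nonempty (Fin r) := ⟨⟨0, hr⟩⟩
  obtain ⟨γ, hγ⟩ := exists_forall_card_filter_le (fun γ A => ¬ EpsBalancedOn γ ε A)
    (Icc m n) (fun ℓ => powersetCard ℓ univ) hp fun ℓ hℓ A hA => by
      refine (hbad A ?_).trans_eq (by simp)
      rw [(mem_powersetCard.1 hA).2]; exact (mem_Icc.1 hℓ).1
  refine ⟨γ, fun ℓ hmℓ hℓn => ?_⟩
  have hfewBad := hγ ℓ (mem_Icc.2 ⟨hmℓ, hℓn⟩)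
  have hsplit := card_filter_add_card_filter_not (s := powersetCard ℓ (univ : Finset (Fin n)))
    (EpsBalancedOn γ ε)
  have hIcc : (#(Icc m n) : ℝ) ≤ n + 1 := by
    rw [Nat.card_Icc]; exact_mod_cast Nat.sub_le _ _
  rw [card_powersetCard, card_univ, Fintype.card_fin] at hsplit hfewBad
  rw [natCard_epsBalancedOn_eq]
  have hC : (0 : ℝ) ≤ n.choose ℓ := Nat.cast_nonneg _
  have := congrArg (Nat.cast (R := ℝ)) hsplit
  push_cast at this
  nlinarith [mul_le_mul_of_nonneg_right (mul_le_mul_of_nonneg_right hIcc hp) hC]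

theorem epsBalancedOn_of_le (γ : {S : Finset (Fin n) // S.card = k} → Fin r) {ε : ℝ}
    (hε : r ≤ ε) (A : Finset (Fin n)) : EpsBalancedOn γ ε A := by
  intro i
  have hr : (1 : ℝ) ≤ r := Nat.one_le_cast.2 i.pos
  have hC : (0 : ℝ) ≤ A.card.choose k := Nat.cast_nonneg _
  have hX : (Nat.card {S : {S : Finset (Fin n) // S.card = k} // γ S = i ∧ S.1 ⊆ A} : ℝ) ≤
      A.card.choose k := by
    rw [natCard_color_subset_eq_card_filter, ← card_filter_subset_eq_choose]
    exact_mod_cast card_filter_le _ _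
  constructor
  · have hlow : (1 - ε) / r ≤ 0 := div_nonpos_of_nonpos_of_nonneg (by linarith) (by linarith)
    exact (mul_nonpos_of_nonpos_of_nonneg hlow hC).trans (Nat.cast_nonneg _)
  · refine hX.trans (le_mul_of_one_le_left hC ?_)
    rw [le_div_iff₀ (by linarith)]; linarith

theorem isBalancedColoring_of_le (m : ℕ) {ε δ : ℝ} (hε : r ≤ ε) (hδ : 0 ≤ δ)
    (γ : {S : Finset (Fin n) // S.card = k} → Fin r) : IsBalancedColoring m ε δ γ := by
  classical
  intro ℓ _ _
  rw [natCard_epsBalancedOn_eq, filter_true_of_mem fun A _ => epsBalancedOn_of_le γ hε A,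
    card_powersetCard, card_univ, Fintype.card_fin]
  nlinarith [(Nat.cast_nonneg (n.choose ℓ) : (0 : ℝ) ≤ _)]

end Balanced

theorem rpow_one_div_four_sq {x : ℝ} (hx : 0 ≤ x) : (x ^ (1 / 4 : ℝ)) ^ 2 = √x := by
  rw [← rpow_natCast, ← rpow_mul hx, sqrt_eq_rpow]; norm_num

theorem sqrt_add_le_sq_pow_mul_choose {m k : ℕ} {L : ℝ} (hk : 1 ≤ k) (hkm : k ≤ m)
    (h16 : 16 * k ≤ √m) (hL : 2 ≤ L) :
    √m + 8 * L ≤ ((3 * L ^ 2 / (m : ℝ) ^ (1 / 4 : ℝ)) ^ k) ^ 2 * m.choose k := by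
  have hkR : (1 : ℝ) ≤ k := Nat.one_le_cast.2 hk
  have hm : 0 < √m := by linarith
  obtain ⟨x, hxdef⟩ : ∃ x : ℝ, x = 9 * L ^ 4 * √m / k := ⟨_, rfl⟩
  have hx : (3 * L ^ 2 / (m : ℝ) ^ (1 / 4 : ℝ)) ^ 2 * (m / k) = x := by
    rw [div_pow, rpow_one_div_four_sq m.cast_nonneg, hxdef]
    field_simp
    linear_combination (-9) * sq_sqrt m.cast_nonneg
  have hL4 : 16 ≤ L ^ 4 := by nlinarith [pow_le_pow_left₀ zero_le_two hL 4]
  have hx2 : 2 ≤ x := by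
    rw [hxdef, le_div_iff₀ (by linarith)]; nlinarith
  have hbernoulli : k * x / 2 ≤ x ^ k := by
    have := one_add_mul_le_pow (a := x - 1) (by linarith) k
    rw [add_sub_cancel] at this
    nlinarith
  calc √m + 8 * L ≤ k * x / 2 := by
        rw [hxdef]; field_simp; nlinarith [pow_le_pow_left₀ zero_le_two hL 3]
    _ ≤ x ^ k := hbernoulli
    _ = ((3 * L ^ 2 / (m : ℝ) ^ (1 / 4 : ℝ)) ^ 2) ^ k * ((m : ℝ) / k) ^ k := by
        rw [← mul_pow, hx]
    _ ≤ ((3 * L ^ 2 / (m : ℝ) ^ (1 / 4 : ℝ)) ^ k) ^ 2 * m.choose k := by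
        rw [← pow_mul, mul_comm 2 k, pow_mul]
        gcongr
        exact Nat.pow_div_le_choose hkm

theorem sixteen_mul_lt_of_mul_exp_neg_lt {r k : ℕ} {y : ℝ} (hr : 2 ≤ r) (hk : 1 ≤ k)
    (h : 4 * (r : ℝ) ^ 2 * k * exp (-y / (16 * k)) < r) : 16 * k < y := by
  have hrR : (2 : ℝ) ≤ r := by exact_mod_cast hr
  have hkR : (1 : ℝ) ≤ k := Nat.one_le_cast.2 hk
  have hexp : 4 * r * k < exp (y / (16 * k)) := by
    rw [neg_div, exp_neg] at h
    rw [← mul_lt_mul_iff_right₀ (by positivity : (0 : ℝ) < r)]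
    rw [mul_inv_lt_iff₀ (exp_pos _)] at h
    nlinarith
  have : exp 1 < exp (y / (16 * k)) := by
    nlinarith [exp_one_lt_d9]
  rw [exp_lt_exp, lt_div_iff₀ (by positivity)] at this
  linarith

theorem log_le_logb_two {x : ℝ} (hx : 1 ≤ x) : log x ≤ logb 2 x := by
  rw [logb, le_div_iff₀ (log_pos one_lt_two)]
  exact mul_le_of_le_one_right (log_nonneg hx) (by linarith [log_two_lt_d9])

theorem mul_exp_neg_div_le {a c X : ℝ} (ha : 0 < a) (h : c + 8 * log a ≤ X) :
    a * exp (-X / 8) ≤ exp (-c / 8) := by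
  calc a * exp (-X / 8) ≤ a * exp (-c / 8 - log a) := by gcongr; linarith
    _ = exp (-c / 8) := by rw [exp_sub, exp_log ha]; field_simp

/-- Corollary 3.12 of the paper: an explicit balanced coloring. -/
theorem explicit_balanced_coloring :
    ∃ Cstar : ℝ, 1 ≤ Cstar ∧
      ∀ n m k r : ℕ, 1 ≤ k → k ≤ m → (m : ℝ) ≤ (n : ℝ) / 2 → 2 ≤ r →
        ∃ n' : ℕ, (n : ℝ) / 2 < (n' : ℝ) ∧ n' ≤ n ∧
          ∃ γ : {S : Finset (Fin n') // S.card = k} → Fin r,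
            IsBalancedColoring m
              (4 * (r : ℝ) ^ 2 * k * Real.exp (-Real.sqrt m / (16 * k)) +
                r * ((3 * Cstar * (Real.logb 2 ((n : ℝ) + r)) ^ 2) /
                  (m : ℝ) ^ ((1 : ℝ) / 4)) ^ k)
              (4 * r * Real.exp (-Real.sqrt m / 8)) γ := by
  refine ⟨1, le_rfl, fun n m k r hk hkm hmn hr => ?_⟩
  have hm : (1 : ℝ) ≤ m := Nat.one_le_cast.2 (hk.trans hkm)
  refine ⟨n, by linarith, le_rfl, ?_⟩
  simp only [mul_one]
  set L := logb 2 ((n : ℝ) + r)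
  set s := (3 * L ^ 2 / (m : ℝ) ^ (1 / 4 : ℝ)) ^ k
  set εₐ := 4 * (r : ℝ) ^ 2 * k * exp (-√m / (16 * k))
  have hr0 : 0 < r := by omega
  have hrR : (2 : ℝ) ≤ r := by exact_mod_cast hr
  have hs0 : 0 ≤ s := by positivity
  have hεₐ0 : 0 ≤ εₐ := by positivity
  by_cases hεr : (r : ℝ) ≤ εₐ + r * s
  · exact ⟨fun _ => ⟨0, hr0⟩, isBalancedColoring_of_le m hεr (by positivity) _⟩
  have hs1 : s ≤ 1 := by nlinarith
  have h16 : 16 * k < √m := sixteen_mul_lt_of_mul_exp_neg_lt hr hk (by nlinarith)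
  have hL : 2 ≤ L := by
    rw [le_logb_iff_rpow_le one_lt_two (by positivity)]; norm_num; linarith
  have hlog : log (n + 1) ≤ L :=
    (log_le_log (by positivity) (by linarith)).trans (log_le_logb_two (by linarith))
  have hkey : √m + 8 * L ≤ s ^ 2 * m.choose k := sqrt_add_le_sq_pow_mul_choose hk hkm h16.le hL
  refine exists_isBalancedColoring hr0 (p := 2 * r * exp (-(s ^ 2 * m.choose k) / 8))
    (by positivity) (fun A hA => card_not_epsBalancedOn_le_of_mul_le hr0 hs0 hs1 (by linarith) hA)
    ?_
  calc (n + 1 : ℝ) * (2 * r * exp (-(s ^ 2 * m.choose k) / 8))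
      = 2 * r * ((n + 1) * exp (-(s ^ 2 * m.choose k) / 8)) := by ring
    _ ≤ 2 * r * exp (-√m / 8) := by
        gcongr; exact mul_exp_neg_div_le (by positivity) (by linarith)
    _ ≤ 4 * r * exp (-√m / 8) := by gcongr; norm_num
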